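/- arXiv:1208.6424 — 3 statements merged into one kernel-verified Lean document; each statement's English description precedes it below -/
import Mathlib

section
/- The set B*_k = { t_{n-1} t_{n-2} ... t_{2k} · t_{2k-2} t_{2k-4} ... t_2 : each t_j ∈ {1} ∪ {s_{i,j} : 1 ≤ i ≤ j} } has exactly n!/(2^k k!) elements. -/
/-- The simple transposition `s_i = (i, i+1)`, acting on the vertices `1, …, n` (inside `ℕ`). -/
def simpleT (i : ℕ) : Equiv.Perm ℕ := Equiv.swap i (i + 1)

/-- `sseq i j = s_i s_{i+1} ⋯ s_j` for `i ≤ j`. -/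
def sseq (i j : ℕ) : Equiv.Perm ℕ := ((List.range' i (j + 1 - i)).map simpleT).prod

/-- The factor `t_j`: the identity if `t j = 0`, and `s_{t j, j} = s_{t j} s_{t j + 1} ⋯ s_j`
if `1 ≤ t j ≤ j`. -/
def tfac (t : ℕ → ℕ) (j : ℕ) : Equiv.Perm ℕ := if t j = 0 then 1 else sseq (t j) j

/-- The Coxeter length of `σ ∈ S_n`: the number of inversions
`{(i, j) : 1 ≤ i < j ≤ n, σ j < σ i}`. -/
def len (n : ℕ) (σ : Equiv.Perm ℕ) : ℕ :=
  ((Finset.Icc 1 n ×ˢ Finset.Icc 1 n).filter fun p => p.1 < p.2 ∧ σ p.2 < σ p.1).card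

/-- The product `t_{n-1} t_{n-2} ⋯ t_{2k} ⋅ t_{2k-2} t_{2k-4} ⋯ t_2`. -/
def BstarProd (n k : ℕ) (t : ℕ → ℕ) : Equiv.Perm ℕ :=
  (((List.range' (2*k) (n - 2*k)).reverse).map (tfac t)).prod *
  (((List.range (k-1)).map (fun m => tfac t (2*(m+1)))).reverse).prod

/-- The set `B*_k = { t_{n-1} t_{n-2} ⋯ t_{2k} ⋅ t_{2k-2} t_{2k-4} ⋯ t_2 }`, where each
`t_j ∈ {1} ∪ {s_{i,j} : 1 ≤ i ≤ j}`. -/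
def Bstar (n k : ℕ) : Set (Equiv.Perm ℕ) :=
  {ω | ∃ t : ℕ → ℕ, (∀ j, t j ≤ j) ∧ ω = BstarProd n k t}

/-!
Write the factors in decreasing order of their index `j`. Every factor of index `j` fixes all
points above `j + 1`, so the product sends `a + 1`, for the largest index `a`, to
`tfac t a (a + 1)`, which is `a + 1` when `t a = 0` and `t a` otherwise. Hence the first factor is
read off from the product, and by induction the map `t ↦ ∏ t_j` is injective on the `j + 1`
choices per index: `|B*_k| = ∏_j (j + 1)`. The indices are `2k, …, n - 1` and the even numbers
`2, …, 2k - 2`, so this product is `(n! / (2k)!) · (2k - 1)‼ = n! / (2^k k!)`.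
-/

open Equiv Nat

lemma sseq_eq_mul {i j : ℕ} (h : i ≤ j) : sseq i j = simpleT i * sseq (i + 1) j := by
  rw [sseq, sseq, show j + 1 - i = (j + 1 - (i + 1)) + 1 by omega, List.range'_succ,
    List.map_cons, List.prod_cons]

lemma sseq_apply_of_lt {i j x : ℕ} (h : j + 1 < x) : sseq i j x = x := by
  rw [sseq, ← Perm.smul_def, ← MulAction.mem_stabilizer_iff]
  refine Subgroup.list_prod_mem _ fun p hp => ?_
  obtain ⟨m, hm, rfl⟩ := List.mem_map.1 hp
  rw [List.mem_range'_1] at hm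
  exact Equiv.swap_apply_of_ne_of_ne (by omega) (by omega)

lemma sseq_apply_succ {i j : ℕ} (h : i ≤ j) : sseq i j (j + 1) = i := by
  obtain ⟨d, rfl⟩ := Nat.exists_eq_add_of_le h
  induction d generalizing i with
  | zero => simp [sseq, simpleT]
  | succ d ih =>
    rw [sseq_eq_mul h, Perm.mul_apply, show i + (d + 1) = i + 1 + d by omega, ih (by omega)]
    simp [simpleT]

lemma tfac_apply_of_lt {t : ℕ → ℕ} {j x : ℕ} (h : j + 1 < x) : tfac t j x = x := by
  unfold tfac
  split_ifs
  · rfl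
  · exact sseq_apply_of_lt h

lemma tfac_apply_succ {t : ℕ → ℕ} {j : ℕ} (h : t j ≤ j) :
    tfac t j (j + 1) = if t j = 0 then j + 1 else t j := by
  unfold tfac
  split_ifs with h0
  · rfl
  · exact sseq_apply_succ (by omega)

lemma prod_tfac_apply_of_lt {L : List ℕ} {t : ℕ → ℕ} {x : ℕ} (h : ∀ j ∈ L, j + 1 < x) :
    (L.map (tfac t)).prod x = x := by
  rw [← Perm.smul_def, ← MulAction.mem_stabilizer_iff]
  refine Subgroup.list_prod_mem _ fun p hp => ?_
  obtain ⟨j, hj, rfl⟩ := List.mem_map.1 hp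
  exact tfac_apply_of_lt (h j hj)

def tfacProds (L : List ℕ) : Set (Perm ℕ) :=
  {ω | ∃ t : ℕ → ℕ, (∀ j, t j ≤ j) ∧ ω = (L.map (tfac t)).prod}

lemma tfacProds_nil : tfacProds [] = {1} := by
  ext ω
  simp only [tfacProds, List.map_nil, List.prod_nil, Set.mem_ofPred_eq, Set.mem_singleton_iff]
  exact ⟨fun ⟨_, _, hω⟩ => hω, fun hω => ⟨fun _ => 0, fun _ => Nat.zero_le _, hω⟩⟩

lemma tfacProds_cons {a : ℕ} {L : List ℕ} (ha : a ∉ L) :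
    tfacProds (a :: L) =
      (fun p : ℕ × Perm ℕ => tfac (fun _ => p.1) a * p.2) '' (Set.Iic a ×ˢ tfacProds L) := by
  ext ω
  simp only [tfacProds, List.map_cons, List.prod_cons, Set.mem_image, Set.mem_prod,
    Set.mem_Iic, Set.mem_ofPred_eq, Prod.exists]
  constructor
  · rintro ⟨t, ht, rfl⟩
    exact ⟨t a, _, ⟨ht a, t, ht, rfl⟩, rfl⟩
  · rintro ⟨c, _, ⟨hc, t, ht, rfl⟩, rfl⟩
    refine ⟨Function.update t a c, fun j => ?_, ?_⟩
    · rcases eq_or_ne j a with rfl | hj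
      · simpa using hc
      · simpa [hj] using ht j
    · have hL : L.map (tfac (Function.update t a c)) = L.map (tfac t) :=
        List.map_congr_left fun j hj => by
          simp [tfac, Function.update_of_ne (ne_of_mem_of_not_mem hj ha)]
      simp [hL, tfac]

lemma injOn_tfac_mul {a : ℕ} {L : List ℕ} (hL : ∀ j ∈ L, j < a) :
    Set.InjOn (fun p : ℕ × Perm ℕ => tfac (fun _ => p.1) a * p.2)
      (Set.Iic a ×ˢ tfacProds L) := by
  rintro ⟨c, _⟩ ⟨hc, t, -, rfl⟩ ⟨c', _⟩ ⟨hc', t', -, rfl⟩ heq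
  rw [Set.mem_Iic] at hc hc'
  have hfix : ∀ s : ℕ → ℕ, (L.map (tfac s)).prod (a + 1) = a + 1 := fun s =>
    prod_tfac_apply_of_lt fun j hj => by have := hL j hj; omega
  have htop := congrArg (fun σ : Perm ℕ => σ (a + 1)) heq
  simp only [Perm.mul_apply, hfix] at htop
  rw [tfac_apply_succ hc, tfac_apply_succ hc'] at htop
  have hcc : c = c' := by split_ifs at htop <;> omega
  subst hcc
  simpa using heq

lemma ncard_tfacProds {L : List ℕ} (hL : L.Pairwise (· > ·)) :
    (tfacProds L).ncard = (L.map (· + 1)).prod := by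
  induction L with
  | nil => simp [tfacProds_nil]
  | cons a L ih =>
    rw [List.pairwise_cons] at hL
    rw [tfacProds_cons fun ha => lt_irrefl a (hL.1 a ha), (injOn_tfac_mul hL.1).ncard_image,
      Set.ncard_prod, ih hL.2, List.map_cons, List.prod_cons, ← Finset.coe_Iic,
      Set.ncard_coe_finset, Nat.card_Iic]

/-- The indices `[n-1, …, 2k, 2k-2, 2k-4, …, 2]` of the factors of `BstarProd n k`. -/
def bstarIndices (n k : ℕ) : List ℕ :=
  (List.range' (2 * k) (n - 2 * k)).reverse ++
    ((List.range (k - 1)).map fun m => 2 * (m + 1)).reverse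

lemma bstarProd_eq_prod_bstarIndices (n k : ℕ) (t : ℕ → ℕ) :
    BstarProd n k t = ((bstarIndices n k).map (tfac t)).prod := by
  simp only [BstarProd, bstarIndices, List.map_append, List.prod_append, List.map_reverse,
    List.map_map]
  rfl

lemma Bstar_eq_tfacProds (n k : ℕ) : Bstar n k = tfacProds (bstarIndices n k) := by
  simp only [Bstar, tfacProds, bstarProd_eq_prod_bstarIndices]

lemma bstarIndices_pairwise_gt (n k : ℕ) : (bstarIndices n k).Pairwise (· > ·) := by
  rw [bstarIndices, List.pairwise_append, List.pairwise_reverse, List.pairwise_reverse,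
    List.pairwise_map]
  refine ⟨List.pairwise_lt_range' _ (by norm_num), List.pairwise_lt_range.imp (by omega), ?_⟩
  intro a ha b hb
  rw [List.mem_reverse, List.mem_range'_1] at ha
  obtain ⟨m, hm, rfl⟩ := List.mem_map.1 (List.mem_reverse.1 hb)
  rw [List.mem_range] at hm
  omega

lemma factorial_mul_prod_range'_succ (a c : ℕ) :
    a ! * ((List.range' a c).map (· + 1)).prod = (a + c)! := by
  induction c generalizing a with
  | zero => simp
  | succ c ih =>
    rw [List.range'_succ, List.map_cons, List.prod_cons, ← mul_assoc, mul_comm a !,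
      ← Nat.factorial_succ, ih, Nat.add_right_comm, Nat.add_assoc]

lemma prod_map_range_odd_eq_doubleFactorial (m : ℕ) :
    ((List.range m).map fun i => 2 * (i + 1) + 1).prod = (2 * m + 1)‼ := by
  induction m with
  | zero => rfl
  | succ m ih =>
    rw [List.range_succ, List.map_append, List.prod_append, ih, List.map_singleton,
      List.prod_singleton, mul_comm, show 2 * (m + 1) + 1 = 2 * m + 1 + 2 by ring,
      Nat.doubleFactorial_add_two]

lemma factorial_two_mul_eq_mul_prod_odd (k : ℕ) :
    (2 * k)! = 2 ^ k * k ! * ((List.range (k - 1)).map fun i => 2 * (i + 1) + 1).prod := by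
  cases k with
  | zero => rfl
  | succ k =>
    rw [prod_map_range_odd_eq_doubleFactorial, Nat.add_sub_cancel,
      ← Nat.doubleFactorial_two_mul, show 2 * (k + 1) = 2 * k + 1 + 1 by ring,
      Nat.factorial_eq_mul_doubleFactorial]

lemma two_pow_mul_factorial_mul_prod_bstarIndices {n k : ℕ} (h : 2 * k ≤ n) :
    2 ^ k * k ! * ((bstarIndices n k).map (· + 1)).prod = n ! := by
  rw [bstarIndices, List.map_append, List.prod_append, List.map_reverse, List.prod_reverse,
    List.map_reverse, List.prod_reverse, List.map_map, Function.comp_def, mul_comm (List.prod _),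
    ← mul_assoc, ← factorial_two_mul_eq_mul_prod_odd, factorial_mul_prod_range'_succ,
    Nat.add_sub_cancel' h]

/-- `B*_k` has exactly `n!/(2^k k!)` elements. -/
theorem card_Bstar (n k : ℕ) (h : 2 * k ≤ n) :
    (Bstar n k).ncard = n.factorial / (2 ^ k * k.factorial) := by
  rw [Bstar_eq_tfacProds, ncard_tfacProds (bstarIndices_pairwise_gt n k),
    ← two_pow_mul_factorial_mul_prod_bstarIndices h, Nat.mul_div_cancel_left _ (by positivity)]
end

section
/- In the q-Brauer algebra Br_n(r,q), for 1 ≤ j ≤ k the identity g_{2j+1} · g⁺_{2,2k+1} g⁻_{1,2k} = g⁺_{2,2k+1} g⁻_{1,2k} · g_{2j-1} holds, where g⁺_{l,m} = g_l g_{l+1} ... g_m and g⁻_{l,m} = g_l^{-1} g_{l+1}^{-1} ... g_m^{-1} for l ≤ m. -/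
/-- The `q`-Brauer algebra `Br_n(r, q)` (in the sense of Wenzl): an algebra `A` over a commutative
ring `R` with invertible parameters `q`, `r` and `δ = (r−1)/(q−1)`, with generators
`g_1, …, g_{n-1}` (with inverses) and `e`, subject to the Hecke relations (H) for the `g_i`,
`(E₁)`: `e² = ((r−1)/(q−1)) e`, `(E₂)`: `e g_i = g_i e` for `i > 2`, `e g_1 = g_1 e = q e`,
`e g_2 e = r e`, `e g_2⁻¹ e = q⁻¹ e`, and `(E₃)` involving
`e_{(2)} = e (g_2 g_3 g_1⁻¹ g_2⁻¹) e`. -/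
structure QBrauer (R : Type) [CommRing R] (q r δ : Rˣ) (n : ℕ)
    (A : Type) [Ring A] [Algebra R A] where
  g : ℕ → A
  ginv : ℕ → A
  e : A
  param : ((q : R) - 1) * (δ : R) = (r : R) - 1
  mul_ginv : ∀ i, 1 ≤ i → i < n → g i * ginv i = 1
  ginv_mul : ∀ i, 1 ≤ i → i < n → ginv i * g i = 1
  braid : ∀ i, 1 ≤ i → i + 1 < n → g i * g (i+1) * g i = g (i+1) * g i * g (i+1)
  gcomm : ∀ i j, 1 ≤ i → i + 1 < j → j < n → g i * g j = g j * g i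
  quad : ∀ i, 1 ≤ i → i < n → g i * g i = ((q : R) - 1) • g i + (q : R) • (1 : A)
  esq : e * e = (δ : R) • e
  e_g : ∀ i, 2 < i → i < n → e * g i = g i * e
  e_g1 : e * g 1 = (q : R) • e
  g1_e : g 1 * e = (q : R) • e
  e_g2_e : e * g 2 * e = (r : R) • e
  e_g2inv_e : e * ginv 2 * e = ((q⁻¹ : Rˣ) : R) • e
  E3_left : 4 ≤ n →
    g 2 * g 3 * ginv 1 * ginv 2 * (e * (g 2 * g 3 * ginv 1 * ginv 2) * e)
      = e * (g 2 * g 3 * ginv 1 * ginv 2) * e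
  E3_right : 4 ≤ n →
    (e * (g 2 * g 3 * ginv 1 * ginv 2) * e) * (g 2 * g 3 * ginv 1 * ginv 2)
      = e * (g 2 * g 3 * ginv 1 * ginv 2) * e

variable {R : Type} [CommRing R] {q r δ : Rˣ} {n : ℕ} {A : Type} [Ring A] [Algebra R A]

/-- `g⁺_{l,m} = g_l g_{l+1} ⋯ g_m` (for `l ≤ m`; ascending indices). -/
def gp (b : QBrauer R q r δ n A) (l m : ℕ) : A :=
  ((List.range' l (m + 1 - l)).map b.g).prod

/-- `g⁻_{l,m} = g_l⁻¹ g_{l+1}⁻¹ ⋯ g_m⁻¹` (for `l ≤ m`; ascending indices). -/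
def gm (b : QBrauer R q r δ n A) (l m : ℕ) : A :=
  ((List.range' l (m + 1 - l)).map b.ginv).prod

/-- `g⁺_{m,l} = g_m g_{m-1} ⋯ g_l` (for `m ≥ l`; descending indices). -/
def gpd (b : QBrauer R q r δ n A) (m l : ℕ) : A :=
  (((List.range' l (m + 1 - l)).map b.g).reverse).prod

/-- `g⁻_{m,l} = g_m⁻¹ g_{m-1}⁻¹ ⋯ g_l⁻¹` (for `m ≥ l`; descending indices). -/
def gmd (b : QBrauer R q r δ n A) (m l : ℕ) : A :=
  (((List.range' l (m + 1 - l)).map b.ginv).reverse).prod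

/-- The elements `e_{(k)}`, defined inductively by `e_{(1)} = e` and
`e_{(k+1)} = e g⁺_{2,2k+1} g⁻_{1,2k} e_{(k)}`. -/
def ee (b : QBrauer R q r δ n A) : ℕ → A
  | 0 => 1
  | 1 => b.e
  | (k+2) => b.e * gp b 2 (2*(k+1)+1) * gm b 1 (2*(k+1)) * ee b (k+1)

/-!
Each factor `g⁺_{2,2k+1}` and `g⁻_{1,2k}` shifts generator indices by one under
conjugation: `g_{i+1}` passes through the adjacent pair `g_i g_{i+1}` (resp.
`g_i⁻¹ g_{i+1}⁻¹`) turning into `g_i` by the braid relation, and commutes with all other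
factors. Composing the two shifts carries `g_{2j-1}` to `g_{2j}` and then to `g_{2j+1}`.
-/

section Monoid

variable {M : Type*} [Monoid M]

theorem Commute.inv_left_of_mul_eq_one {a x x' : M} (hx : x * x' = 1) (hx' : x' * x = 1)
    (h : Commute x a) : Commute x' a :=
  Commute.units_inv_left (u := ⟨x, x', hx, hx'⟩) h

theorem semiconjBy_mul_of_braid {x y : M} (hb : x * y * x = y * x * y) :
    SemiconjBy (x * y) x y := by
  rw [SemiconjBy, hb, mul_assoc]

theorem semiconjBy_inv_mul_inv_of_braid {x y x' y' : M}
    (hx : x * x' = 1) (hx' : x' * x = 1) (hy : y * y' = 1) (hy' : y' * y = 1)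
    (hb : x * y * x = y * x * y) : SemiconjBy (x' * y') x y := by
  set u : Mˣ := ⟨x, x', hx, hx'⟩
  set v : Mˣ := ⟨y, y', hy, hy'⟩
  have hb' : u * v * u = v * u * v := Units.ext hb
  have key : u⁻¹ * v⁻¹ * u = v * (u⁻¹ * v⁻¹) :=
    calc u⁻¹ * v⁻¹ * u = u⁻¹ * v⁻¹ * (u * v * u) * u⁻¹ * v⁻¹ := by group
      _ = u⁻¹ * v⁻¹ * (v * u * v) * u⁻¹ * v⁻¹ := by rw [hb']
      _ = v * (u⁻¹ * v⁻¹) := by group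
  exact congrArg Units.val key

theorem semiconjBy_prod_map_range' (s f : ℕ → M) {l i m : ℕ} (hli : l ≤ i) (him : i < m)
    (hleft : ∀ t, l ≤ t → t < i → Commute (f t) (s (i + 1)))
    (hmid : SemiconjBy (f i * f (i + 1)) (s i) (s (i + 1)))
    (hright : ∀ t, i + 2 ≤ t → t ≤ m → Commute (f t) (s i)) :
    SemiconjBy ((List.range' l (m + 1 - l)).map f).prod (s i) (s (i + 1)) := by
  have hsplit : List.range' l (m + 1 - l)
      = List.range' l (i - l) ++ [i, i + 1] ++ List.range' (i + 2) (m - 1 - i) := by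
    rw [show [i, i + 1] = List.range' (l + (i - l)) 2 by
        rw [show l + (i - l) = i by omega]; rfl,
      List.range'_append_1,
      show i + 2 = l + (i - l + 2) by omega, List.range'_append_1]
    congr 1; omega
  have hL : Commute ((List.range' l (i - l)).map f).prod (s (i + 1)) := by
    refine Commute.list_prod_left _ _ fun y hy => ?_
    obtain ⟨t, ht, rfl⟩ := List.mem_map.mp hy
    rw [List.mem_range'_1] at ht
    exact hleft t ht.1 (by omega)
  have hR : Commute ((List.range' (i + 2) (m - 1 - i)).map f).prod (s i) := by
    refine Commute.list_prod_left _ _ fun y hy => ?_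
    obtain ⟨t, ht, rfl⟩ := List.mem_map.mp hy
    rw [List.mem_range'_1] at ht
    exact hright t ht.1 (by omega)
  rw [hsplit, List.map_append, List.map_append, List.prod_append, List.prod_append]
  simpa only [List.map_cons, List.map_nil, List.prod_cons, List.prod_nil, mul_one]
    using (SemiconjBy.mul_left hL hmid).mul_left hR

end Monoid

namespace QBrauer

variable (b : QBrauer R q r δ n A)

theorem commute_ginv_g {i t : ℕ} (hi : 1 ≤ i) (hin : i < n) (h : Commute (b.g i) (b.g t)) :
    Commute (b.ginv i) (b.g t) :=
  h.inv_left_of_mul_eq_one (b.mul_ginv i hi hin) (b.ginv_mul i hi hin)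

theorem semiconjBy_gp {l i m : ℕ} (hl : 1 ≤ l) (hli : l ≤ i) (him : i < m) (hm : m < n) :
    SemiconjBy (gp b l m) (b.g i) (b.g (i + 1)) :=
  semiconjBy_prod_map_range' b.g b.g hli him
    (fun t hlt hti => b.gcomm t (i + 1) (by omega) (by omega) (by omega))
    (semiconjBy_mul_of_braid (b.braid i (by omega) (by omega)))
    (fun t hit htm => (b.gcomm i t (by omega) (by omega) (by omega)).symm)

theorem semiconjBy_gm {l i m : ℕ} (hl : 1 ≤ l) (hli : l ≤ i) (him : i < m) (hm : m < n) :
    SemiconjBy (gm b l m) (b.g i) (b.g (i + 1)) :=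
  semiconjBy_prod_map_range' b.g b.ginv hli him
    (fun t hlt hti =>
      b.commute_ginv_g (by omega) (by omega) (b.gcomm t (i + 1) (by omega) (by omega) (by omega)))
    (semiconjBy_inv_mul_inv_of_braid (b.mul_ginv i (by omega) (by omega))
      (b.ginv_mul i (by omega) (by omega)) (b.mul_ginv (i + 1) (by omega) (by omega))
      (b.ginv_mul (i + 1) (by omega) (by omega)) (b.braid i (by omega) (by omega)))
    (fun t hit htm =>
      b.commute_ginv_g (by omega) (by omega) (b.gcomm i t (by omega) (by omega) (by omega)).symm)

end QBrauer

/-- Lemma 3.3(a): for `1 ≤ j ≤ k`,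
`g_{2j+1} ⋅ g⁺_{2,2k+1} g⁻_{1,2k} = g⁺_{2,2k+1} g⁻_{1,2k} ⋅ g_{2j-1}`. -/
theorem g_conj_identity (b : QBrauer R q r δ n A) (j k : ℕ)
    (hj : 1 ≤ j) (hjk : j ≤ k) (hk : 2*k + 1 < n) :
    b.g (2*j+1) * (gp b 2 (2*k+1) * gm b 1 (2*k))
      = (gp b 2 (2*k+1) * gm b 1 (2*k)) * b.g (2*j-1) := by
  have hgp : SemiconjBy (gp b 2 (2*k+1)) (b.g (2*j)) (b.g (2*j+1)) :=
    b.semiconjBy_gp (by omega) (by omega) (by omega) hk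
  have hgm : SemiconjBy (gm b 1 (2*k)) (b.g (2*j-1)) (b.g (2*j)) := by
    simpa only [show 2*j-1+1 = 2*j by omega] using
      b.semiconjBy_gm (l := 1) (i := 2*j-1) (by omega) (by omega) (by omega) (by omega)
  exact (hgp.mul_left hgm).eq.symm
end

section
/- In the q-Brauer algebra Br_n(r,q), the element e_{(k+1)} admits the alternative expression e_{(k+1)} = e_{(k)} · g⁻_{2k,1} g⁺_{2k+1,2} · e, where g⁻_{2k,1} = g_{2k}^{-1} g_{2k-1}^{-1}...g_1^{-1} and g⁺_{2k+1,2} = g_{2k+1} g_{2k}...g_2. -/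
variable {R : Type} [CommRing R] {q r δ : Rˣ} {n : ℕ} {A : Type} [Ring A] [Algebra R A]

section Products
variable {M : Type*} [Monoid M] (f : ℕ → M)

def ascProd (l m : ℕ) : M := ((List.range' l (m + 1 - l)).map f).prod

def descProd (m l : ℕ) : M := ((List.range' l (m + 1 - l)).map f).reverse.prod

theorem List.range'_eq_append_range' {l j m : ℕ} (h₁ : l ≤ j + 1) (h₂ : j ≤ m) :
    List.range' l (m + 1 - l) = List.range' l (j + 1 - l) ++ List.range' (j + 1) (m - j) := by
  have h := List.range'_append_1 (s := l) (m := j + 1 - l) (n := m - j)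
  rwa [show l + (j + 1 - l) = j + 1 by omega, show j + 1 - l + (m - j) = m + 1 - l by omega,
    eq_comm] at h

variable {f}

theorem ascProd_split {l j m : ℕ} (h₁ : l ≤ j + 1) (h₂ : j ≤ m) :
    ascProd f l m = ascProd f l j * ascProd f (j + 1) m := by
  simp only [ascProd, List.range'_eq_append_range' h₁ h₂, List.map_append, List.prod_append,
    show m + 1 - (j + 1) = m - j by omega]

theorem descProd_split {l j m : ℕ} (h₁ : l ≤ j + 1) (h₂ : j ≤ m) :
    descProd f m l = descProd f m (j + 1) * descProd f j l := by
  simp only [descProd, List.range'_eq_append_range' h₁ h₂, List.map_append, List.reverse_append,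
    List.prod_append, show m + 1 - (j + 1) = m - j by omega]

theorem ascProd_of_lt {l m : ℕ} (h : m < l) : ascProd f l m = 1 := by
  simp [ascProd, show m + 1 - l = 0 by omega]

theorem descProd_of_lt {l m : ℕ} (h : m < l) : descProd f m l = 1 := by
  simp [descProd, show m + 1 - l = 0 by omega]

theorem ascProd_pair (i : ℕ) : ascProd f i (i + 1) = f i * f (i + 1) := by
  simp [ascProd, show i + 1 + 1 - i = 2 by omega, List.range'_succ]

theorem descProd_pair (i : ℕ) : descProd f (i + 1) i = f (i + 1) * f i := by
  simp [descProd, show i + 1 + 1 - i = 2 by omega, List.range'_succ]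

theorem ascProd_cons {l m : ℕ} (h : l ≤ m) : ascProd f l m = f l * ascProd f (l + 1) m := by
  simp [ascProd, show m + 1 - l = m - l + 1 by omega, List.range'_succ,
    show m + 1 - (l + 1) = m - l by omega]

theorem commute_ascProd_left {x : M} {l m : ℕ} (h : ∀ j, l ≤ j → j ≤ m → Commute (f j) x) :
    Commute (ascProd f l m) x := by
  refine Commute.list_prod_left _ _ fun y hy => ?_
  obtain ⟨j, hj, rfl⟩ := List.mem_map.1 hy
  rw [List.mem_range'_1] at hj
  exact h j hj.1 (by omega)

theorem commute_descProd_left {x : M} {l m : ℕ} (h : ∀ j, l ≤ j → j ≤ m → Commute (f j) x) :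
    Commute (descProd f m l) x := by
  refine Commute.list_prod_left _ _ fun y hy => ?_
  obtain ⟨j, hj, rfl⟩ := List.mem_map.1 (List.mem_reverse.1 hy)
  rw [List.mem_range'_1] at hj
  exact h j hj.1 (by omega)

theorem semiconjBy_ascProd {x y : M} {l i m : ℕ} (hl : l ≤ i + 1) (hm : i + 2 ≤ m)
    (hpre : ∀ j, l ≤ j → j ≤ i → Commute (f j) y)
    (hmid : SemiconjBy (f (i + 1) * f (i + 2)) x y)
    (hsuf : ∀ j, i + 3 ≤ j → j ≤ m → Commute (f j) x) :
    SemiconjBy (ascProd f l m) x y := by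
  rw [ascProd_split hl (by omega : i ≤ m), ascProd_split (j := i + 2) (by omega) hm,
    ascProd_pair]
  exact SemiconjBy.mul_left (commute_ascProd_left hpre) (hmid.mul_left (commute_ascProd_left hsuf))

theorem semiconjBy_descProd {x y : M} {l i m : ℕ} (hl : l ≤ i + 1) (hm : i + 2 ≤ m)
    (hpre : ∀ j, l ≤ j → j ≤ i → Commute (f j) x)
    (hmid : SemiconjBy (f (i + 2) * f (i + 1)) x y)
    (hsuf : ∀ j, i + 3 ≤ j → j ≤ m → Commute (f j) y) :
    SemiconjBy (descProd f m l) x y := by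
  rw [descProd_split (j := i + 2) (by omega) hm, descProd_split hl (by omega : i ≤ i + 2),
    descProd_pair]
  exact SemiconjBy.mul_left (commute_descProd_left hsuf)
    (hmid.mul_left (commute_descProd_left hpre))

end Products

namespace QBrauer

variable (b : QBrauer R q r δ n A)

def gUnit {i : ℕ} (h₁ : 1 ≤ i) (h₂ : i < n) : Aˣ :=
  ⟨b.g i, b.ginv i, b.mul_ginv i h₁ h₂, b.ginv_mul i h₁ h₂⟩

theorem ginv_mul_g_cancel_left {i : ℕ} (h₁ : 1 ≤ i) (h₂ : i < n) (x : A) :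
    b.ginv i * (b.g i * x) = x := by
  rw [← mul_assoc, b.ginv_mul i h₁ h₂, one_mul]

theorem semiconjBy_ginv {x : A} {i j : ℕ} (hi₁ : 1 ≤ i) (hi₂ : i < n) (hj₁ : 1 ≤ j)
    (hj₂ : j < n) (h : SemiconjBy x (b.g i) (b.g j)) : SemiconjBy x (b.ginv i) (b.ginv j) :=
  SemiconjBy.units_inv_right (x := b.gUnit hi₁ hi₂) (y := b.gUnit hj₁ hj₂) h

theorem commute_ginv {x : A} {i : ℕ} (h₁ : 1 ≤ i) (h₂ : i < n) (h : Commute x (b.g i)) :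
    Commute x (b.ginv i) :=
  b.semiconjBy_ginv h₁ h₂ h₁ h₂ h

theorem commute_g_g {i j : ℕ} (hi : 1 ≤ i) (hj : 1 ≤ j) (hin : i < n) (hjn : j < n)
    (hij : i + 2 ≤ j ∨ j + 2 ≤ i) : Commute (b.g i) (b.g j) := by
  rcases hij with h | h
  · exact b.gcomm i j hi (by omega) hjn
  · exact (b.gcomm j i hj (by omega) hin).symm

theorem commute_g_ginv {i j : ℕ} (hi : 1 ≤ i) (hj : 1 ≤ j) (hin : i < n) (hjn : j < n)
    (hij : i + 2 ≤ j ∨ j + 2 ≤ i) : Commute (b.g i) (b.ginv j) :=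
  b.commute_ginv hj hjn (b.commute_g_g hi hj hin hjn hij)

theorem commute_e_g {i : ℕ} (h₁ : 3 ≤ i) (h₂ : i < n) : Commute b.e (b.g i) :=
  b.e_g i h₁ h₂

theorem commute_e_ginv {i : ℕ} (h₁ : 3 ≤ i) (h₂ : i < n) : Commute b.e (b.ginv i) :=
  b.commute_ginv (by omega) h₂ (b.commute_e_g h₁ h₂)

theorem ginv_eq_smul_sub {i : ℕ} (h₁ : 1 ≤ i) (h₂ : i < n) :
    b.ginv i = ((q⁻¹ : Rˣ) : R) • (b.g i - ((q : R) - 1) • 1) := by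
  have key : b.g i * (((q⁻¹ : Rˣ) : R) • (b.g i - ((q : R) - 1) • 1)) = 1 := by
    rw [mul_smul_comm, mul_sub, b.quad i h₁ h₂, mul_smul_comm, mul_one, add_sub_cancel_left,
      smul_smul, Units.inv_mul, one_smul]
  rw [← b.ginv_mul_g_cancel_left h₁ h₂ (((q⁻¹ : Rˣ) : R) • _), key, mul_one]

theorem ginv_mul_eq_smul_sub {i : ℕ} (h₁ : 1 ≤ i) (h₂ : i < n) (x : A) :
    b.ginv i * x = ((q⁻¹ : Rˣ) : R) • (b.g i * x - ((q : R) - 1) • x) := by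
  rw [b.ginv_eq_smul_sub h₁ h₂, smul_mul_assoc, sub_mul, smul_mul_assoc, one_mul]

theorem mul_ginv_eq_inv_smul {x : A} {i : ℕ} (h₁ : 1 ≤ i) (h₂ : i < n) {c : Rˣ}
    (h : x * b.g i = (c : R) • x) : x * b.ginv i = ((c⁻¹ : Rˣ) : R) • x := by
  calc x * b.ginv i = ((c⁻¹ : Rˣ) : R) • ((c : R) • x * b.ginv i) := by
        rw [smul_mul_assoc, smul_smul, Units.inv_mul, one_smul]
    _ = ((c⁻¹ : Rˣ) : R) • x := by rw [← h, mul_assoc, b.mul_ginv i h₁ h₂, mul_one]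

theorem ginv_mul_eq_inv_smul {x : A} {i : ℕ} (h₁ : 1 ≤ i) (h₂ : i < n) {c : Rˣ}
    (h : b.g i * x = (c : R) • x) : b.ginv i * x = ((c⁻¹ : Rˣ) : R) • x := by
  calc b.ginv i * x = ((c⁻¹ : Rˣ) : R) • (b.ginv i * ((c : R) • x)) := by
        rw [mul_smul_comm, smul_smul, Units.inv_mul, one_smul]
    _ = ((c⁻¹ : Rˣ) : R) • x := by rw [← h, b.ginv_mul_g_cancel_left h₁ h₂]

theorem semiconjBy_g_mul_g {i : ℕ} (h₁ : 1 ≤ i) (h₂ : i + 1 < n) :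
    SemiconjBy (b.g i * b.g (i + 1)) (b.g i) (b.g (i + 1)) := by
  rw [SemiconjBy, b.braid i h₁ h₂, mul_assoc]

theorem semiconjBy_g_succ_mul_g {i : ℕ} (h₁ : 1 ≤ i) (h₂ : i + 1 < n) :
    SemiconjBy (b.g (i + 1) * b.g i) (b.g (i + 1)) (b.g i) := by
  rw [SemiconjBy, ← mul_assoc, ← b.braid i h₁ h₂]

theorem semiconjBy_ginv_mul_ginv {i : ℕ} (h₁ : 1 ≤ i) (h₂ : i + 1 < n) :
    SemiconjBy (b.ginv i * b.ginv (i + 1)) (b.g i) (b.g (i + 1)) :=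
  SemiconjBy.units_inv_symm_left (a := b.gUnit (i := i + 1) (by omega) h₂ * b.gUnit h₁ (by omega))
    (b.semiconjBy_g_succ_mul_g h₁ h₂)

theorem semiconjBy_ginv_succ_mul_ginv {i : ℕ} (h₁ : 1 ≤ i) (h₂ : i + 1 < n) :
    SemiconjBy (b.ginv (i + 1) * b.ginv i) (b.g (i + 1)) (b.g i) :=
  SemiconjBy.units_inv_symm_left (a := b.gUnit h₁ (by omega) * b.gUnit (i := i + 1) (by omega) h₂)
    (b.semiconjBy_g_mul_g h₁ h₂)

def wordA (m : ℕ) : A := ascProd b.g 2 (2 * m + 1) * ascProd b.ginv 1 (2 * m)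

def wordB (m : ℕ) : A := descProd b.ginv (2 * m) 1 * descProd b.g (2 * m + 1) 2

def wordX (m : ℕ) : A := b.g (2 * m + 2) * b.g (2 * m + 3) * b.ginv (2 * m + 1) * b.ginv (2 * m + 2)

def wordY (m : ℕ) : A := b.ginv (2 * m + 2) * b.ginv (2 * m + 1) * b.g (2 * m + 3) * b.g (2 * m + 2)

theorem wordA_zero : b.wordA 0 = 1 := by
  rw [wordA, ascProd_of_lt (by omega), ascProd_of_lt (by omega), mul_one]

theorem wordB_zero : b.wordB 0 = 1 := by
  rw [wordB, descProd_of_lt (by omega), descProd_of_lt (by omega), mul_one]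

theorem wordA_succ {m : ℕ} (h : 2 * m + 3 < n) : b.wordA (m + 1) = b.wordA m * b.wordX m := by
  have hc : ∀ i, 2 * m + 2 ≤ i → i < n → Commute (ascProd b.ginv 1 (2 * m)) (b.g i) :=
    fun i hi hin => commute_ascProd_left fun j hj₁ hj₂ =>
      (b.commute_g_ginv (by omega) hj₁ hin (by omega) (by omega)).symm
  rw [wordA, wordA, wordX, ascProd_split (j := 2 * m + 1) (by omega) (by omega),
    ascProd_split (l := 1) (j := 2 * m) (by omega) (by omega),
    show 2 * (m + 1) + 1 = 2 * m + 2 + 1 by ring, show 2 * (m + 1) = 2 * m + 1 + 1 by ring,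
    ascProd_pair, ascProd_pair]
  simp only [mul_assoc, (hc _ (by omega) h).left_comm, (hc (2 * m + 2) le_rfl (by omega)).left_comm]

theorem wordB_succ {m : ℕ} (h : 2 * m + 3 < n) : b.wordB (m + 1) = b.wordY m * b.wordB m := by
  have hc : ∀ i, 2 * m + 2 ≤ i → i < n → Commute (descProd b.ginv (2 * m) 1) (b.g i) :=
    fun i hi hin => commute_descProd_left fun j hj₁ hj₂ =>
      (b.commute_g_ginv (by omega) hj₁ hin (by omega) (by omega)).symm
  rw [wordB, wordB, wordY, descProd_split (j := 2 * m) (by omega) (by omega),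
    descProd_split (l := 2) (j := 2 * m + 1) (by omega) (by omega),
    show 2 * (m + 1) + 1 = 2 * m + 2 + 1 by ring, show 2 * (m + 1) = 2 * m + 1 + 1 by ring,
    descProd_pair, descProd_pair]
  simp only [mul_assoc, (hc _ (by omega) h).left_comm, (hc (2 * m + 2) le_rfl (by omega)).left_comm]

theorem commute_e_wordX {i : ℕ} (hi : 1 ≤ i) (hn : 2 * i + 3 < n) : Commute b.e (b.wordX i) :=
  (((b.commute_e_g (by omega) (by omega)).mul_right (b.commute_e_g (by omega) hn)).mul_right
    (b.commute_e_ginv (by omega) (by omega))).mul_right (b.commute_e_ginv (by omega) (by omega))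

theorem exists_wordA_succ_eq_wordX_zero_mul (m : ℕ) (h : 2 * m + 3 < n) :
    ∃ w, Commute b.e w ∧ b.wordA (m + 1) = b.wordX 0 * w := by
  induction m with
  | zero => exact ⟨1, Commute.one_right _, by rw [b.wordA_succ h, wordA_zero, one_mul, mul_one]⟩
  | succ m ih =>
    obtain ⟨w, hw, hA⟩ := ih (by omega)
    exact ⟨w * b.wordX (m + 1), hw.mul_right (b.commute_e_wordX (by omega) h),
      by rw [b.wordA_succ h, hA, mul_assoc]⟩

theorem semiconjBy_wordA_g {J m : ℕ} (hJ : 1 ≤ J) (hJm : J + 2 ≤ 2 * m + 1) (hn : 2 * m + 1 < n) :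
    SemiconjBy (b.wordA m) (b.g J) (b.g (J + 2)) := by
  have hp : SemiconjBy (ascProd b.g 2 (2 * m + 1)) (b.g (J + 1)) (b.g (J + 2)) :=
    semiconjBy_ascProd (i := J) (by omega) hJm
      (fun j hj₁ hj₂ => b.commute_g_g (by omega) (by omega) (by omega) (by omega) (by omega))
      (b.semiconjBy_g_mul_g (by omega) (by omega))
      (fun j hj₁ hj₂ => b.commute_g_g (by omega) (by omega) (by omega) (by omega) (by omega))
  have hm : SemiconjBy (ascProd b.ginv 1 (2 * m)) (b.g J) (b.g (J + 1)) :=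
    semiconjBy_ascProd (i := J - 1) (by omega) (by omega)
      (fun j hj₁ hj₂ => (b.commute_g_ginv (by omega) (by omega) (by omega) (by omega)
        (by omega)).symm)
      (by rw [show J - 1 + 1 = J by omega, show J - 1 + 2 = J + 1 by omega]
          exact b.semiconjBy_ginv_mul_ginv hJ (by omega))
      (fun j hj₁ hj₂ => (b.commute_g_ginv (by omega) (by omega) (by omega) (by omega)
        (by omega)).symm)
  exact hp.mul_left hm

theorem semiconjBy_wordB_g {J m : ℕ} (hJ : 1 ≤ J) (hJm : J + 2 ≤ 2 * m + 1) (hn : 2 * m + 1 < n) :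
    SemiconjBy (b.wordB m) (b.g (J + 2)) (b.g J) := by
  have hp : SemiconjBy (descProd b.g (2 * m + 1) 2) (b.g (J + 2)) (b.g (J + 1)) :=
    semiconjBy_descProd (i := J) (by omega) hJm
      (fun j hj₁ hj₂ => b.commute_g_g (by omega) (by omega) (by omega) (by omega) (by omega))
      (b.semiconjBy_g_succ_mul_g (by omega) (by omega))
      (fun j hj₁ hj₂ => b.commute_g_g (by omega) (by omega) (by omega) (by omega) (by omega))
  have hm : SemiconjBy (descProd b.ginv (2 * m) 1) (b.g (J + 1)) (b.g J) :=
    semiconjBy_descProd (i := J - 1) (by omega) (by omega)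
      (fun j hj₁ hj₂ => (b.commute_g_ginv (by omega) (by omega) (by omega) (by omega)
        (by omega)).symm)
      (by rw [show J - 1 + 1 = J by omega, show J - 1 + 2 = J + 1 by omega]
          exact b.semiconjBy_ginv_succ_mul_ginv hJ (by omega))
      (fun j hj₁ hj₂ => (b.commute_g_ginv (by omega) (by omega) (by omega) (by omega)
        (by omega)).symm)
  exact hm.mul_left hp

theorem semiconjBy_wordA_wordX {i m : ℕ} (him : i + 2 ≤ m) (hn : 2 * m + 1 < n) :
    SemiconjBy (b.wordA m) (b.wordX i) (b.wordX (i + 1)) := by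
  have hg : ∀ J, 1 ≤ J → J + 2 ≤ 2 * m + 1 → SemiconjBy (b.wordA m) (b.g J) (b.g (J + 2)) :=
    fun J hJ hJm => b.semiconjBy_wordA_g hJ hJm hn
  have hginv : ∀ J, 1 ≤ J → J + 2 ≤ 2 * m + 1 →
      SemiconjBy (b.wordA m) (b.ginv J) (b.ginv (J + 2)) :=
    fun J hJ hJm => b.semiconjBy_ginv hJ (by omega) (by omega) (by omega) (hg J hJ hJm)
  unfold wordX
  rw [show 2 * (i + 1) + 2 = 2 * i + 2 + 2 by ring, show 2 * (i + 1) + 3 = 2 * i + 3 + 2 by ring,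
    show 2 * (i + 1) + 1 = 2 * i + 1 + 2 by ring]
  exact (((hg _ (by omega) (by omega)).mul_right (hg _ (by omega) (by omega))).mul_right
    (hginv _ (by omega) (by omega))).mul_right (hginv _ (by omega) (by omega))

theorem commute_g_wordA {i m : ℕ} (hi : 2 * m + 3 ≤ i) (hin : i < n) :
    Commute (b.g i) (b.wordA m) :=
  ((commute_ascProd_left fun _ hj₁ hj₂ => b.commute_g_g (by omega) (by omega) (by omega) hin
      (by omega)).mul_left
    (commute_ascProd_left fun _ hj₁ hj₂ => (b.commute_g_ginv (by omega) (by omega) hin (by omega)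
      (by omega)).symm)).symm

theorem commute_ginv_wordA {i m : ℕ} (hi : 2 * m + 3 ≤ i) (hin : i < n) :
    Commute (b.ginv i) (b.wordA m) :=
  (b.commute_ginv (by omega) hin (b.commute_g_wordA hi hin).symm).symm

theorem ee_succ (k : ℕ) : ee b (k + 1) = b.e * (b.wordA k * ee b k) := by
  cases k with
  | zero => simp [ee, wordA_zero]
  | succ k => simp only [ee, wordA, mul_assoc]; rfl

theorem commute_ee {x : A} {k : ℕ} (he : Commute x b.e) (hA : ∀ j < k, Commute x (b.wordA j)) :
    Commute x (ee b k) := by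
  induction k with
  | zero => exact Commute.one_right x
  | succ k ih =>
    rw [ee_succ]
    exact he.mul_right ((hA k k.lt_succ_self).mul_right (ih fun j hj => hA j (by omega)))

theorem commute_g_ee {i k : ℕ} (hi : 2 * k + 1 ≤ i) (hin : i < n) : Commute (b.g i) (ee b k) := by
  rcases k with _ | k
  · exact Commute.one_right _
  · exact b.commute_ee (b.commute_e_g (by omega) hin).symm fun j hj =>
      b.commute_g_wordA (by omega) hin

theorem commute_ginv_ee {i k : ℕ} (hi : 2 * k + 1 ≤ i) (hin : i < n) :
    Commute (b.ginv i) (ee b k) :=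
  (b.commute_ginv (by omega) hin (b.commute_g_ee hi hin).symm).symm

theorem g_mul_ee {k : ℕ} (hk : 2 * k + 2 ≤ n) :
    b.g (2 * k + 1) * ee b (k + 1) = (q : R) • ee b (k + 1) := by
  induction k with
  | zero => exact b.g1_e
  | succ k ih =>
    have hA := b.semiconjBy_wordA_g (J := 2 * k + 1) (m := k + 1) (by omega) (by omega) (by omega)
    rw [show 2 * (k + 1) + 1 = 2 * k + 1 + 2 by ring, ee_succ,
      (b.commute_e_g (by omega) (by omega)).symm.left_comm, ← mul_assoc (b.g _), ← hA.eq,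
      mul_assoc, ih (by omega), mul_smul_comm, mul_smul_comm]

theorem ginv_mul_ee {k : ℕ} (hk : 2 * k + 2 ≤ n) :
    b.ginv (2 * k + 1) * ee b (k + 1) = ((q⁻¹ : Rˣ) : R) • ee b (k + 1) :=
  b.ginv_mul_eq_inv_smul (by omega) (by omega) (b.g_mul_ee hk)

theorem wordX_mul_ee {i k : ℕ} (hik : i + 2 ≤ k) (hk : 2 * k ≤ n) :
    b.wordX i * ee b k = ee b k := by
  induction i generalizing k with
  | zero =>
    obtain ⟨s, rfl⟩ : ∃ s, k = s + 2 := ⟨k - 2, by omega⟩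
    obtain ⟨w, hw, hA⟩ := b.exists_wordA_succ_eq_wordX_zero_mul s (by omega)
    have hX : b.wordX 0 = b.g 2 * b.g 3 * b.ginv 1 * b.ginv 2 := rfl
    have hE3 : b.wordX 0 * b.e * b.wordX 0 * b.e = b.e * b.wordX 0 * b.e := by
      simpa only [hX, ← mul_assoc] using b.E3_left (by omega)
    rw [ee_succ, hA, ee_succ, mul_assoc (b.wordX 0) w, hw.symm.left_comm]
    simp only [← mul_assoc]
    rw [hE3]
  | succ i ih =>
    obtain ⟨k, rfl⟩ : ∃ k', k = k' + 1 := ⟨k - 1, by omega⟩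
    rw [ee_succ, (b.commute_e_wordX (by omega) (by omega)).symm.left_comm,
      ← mul_assoc (b.wordX _),
      ← (b.semiconjBy_wordA_wordX (by omega) (by omega)).eq, mul_assoc, ih (by omega) (by omega)]

theorem wordX_mul_g {m : ℕ} (hn : 2 * m + 4 < n) :
    b.wordX m * b.g (2 * m + 4) = b.ginv (2 * m + 4) * b.ginv (2 * m + 3) *
      (b.g (2 * m + 2) * b.g (2 * m + 3) * b.g (2 * m + 4)) * b.wordX m := by
  have had : Commute (b.g (2 * m + 2)) (b.g (2 * m + 4)) :=
    b.commute_g_g (by omega) (by omega) (by omega) hn (by omega)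
  have hδ : SemiconjBy (b.g (2 * m + 2) * b.g (2 * m + 3) * b.g (2 * m + 4))
      (b.g (2 * m + 2) * b.g (2 * m + 3)) (b.g (2 * m + 3) * b.g (2 * m + 4)) := by
    refine SemiconjBy.mul_right ((b.semiconjBy_g_mul_g (by omega) (by omega)).mul_left had.symm) ?_
    rw [mul_assoc]
    exact SemiconjBy.mul_left had (b.semiconjBy_g_mul_g (i := 2 * m + 3) (by omega) hn)
  have hd : Commute (b.g (2 * m + 4)) (b.ginv (2 * m + 1) * b.ginv (2 * m + 2)) :=
    (b.commute_g_ginv (by omega) (by omega) hn (by omega) (by omega)).mul_right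
      (b.commute_g_ginv (by omega) (by omega) hn (by omega) (by omega))
  calc b.wordX m * b.g (2 * m + 4)
      = b.g (2 * m + 2) * b.g (2 * m + 3) *
          ((b.ginv (2 * m + 1) * b.ginv (2 * m + 2)) * b.g (2 * m + 4)) := by
        simp only [wordX, mul_assoc]
    _ = b.ginv (2 * m + 4) * b.ginv (2 * m + 3) *
          ((b.g (2 * m + 3) * b.g (2 * m + 4)) * (b.g (2 * m + 2) * b.g (2 * m + 3) *
            b.g (2 * m + 4))) * (b.ginv (2 * m + 1) * b.ginv (2 * m + 2)) := by
        rw [← hd.eq]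
        simp only [mul_assoc, b.ginv_mul_g_cancel_left (i := 2 * m + 3) (by omega) (by omega),
          b.ginv_mul_g_cancel_left (i := 2 * m + 4) (by omega) hn]
    _ = _ := by
        rw [← hδ.eq]
        simp only [wordX, mul_assoc]

theorem e_wordA_g_ascProd_ee {k m : ℕ} (hm : m + 1 ≤ k) (hk : 2 * k < n) :
    b.e * (b.wordA m * (b.g (2 * m + 2) * (ascProd b.g (2 * m + 3) (2 * k) * ee b k))) =
      (r : R) • (ascProd b.g (2 * m + 3) (2 * k) * ee b k) := by
  induction m with
  | zero =>
    obtain ⟨k, rfl⟩ : ∃ k', k = k' + 1 := ⟨k - 1, by omega⟩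
    have hP : Commute b.e (ascProd b.g 3 (2 * (k + 1))) :=
      (commute_ascProd_left fun _ hj₁ hj₂ => (b.commute_e_g hj₁ (by omega)).symm).symm
    rw [show 2 * 0 + 2 = 2 from rfl, show 2 * 0 + 3 = 3 from rfl, wordA_zero, one_mul, ee_succ,
      hP.symm.left_comm, ← mul_assoc, ← mul_assoc, b.e_g2_e, smul_mul_assoc, hP.left_comm]
  | succ m ih =>
    have hXP : Commute (b.wordX m) (ascProd b.g (2 * m + 5) (2 * k)) :=
      (commute_ascProd_left fun _ hj₁ hj₂ =>
        (((b.commute_g_g (by omega) (by omega) (by omega) (by omega) (by omega)).mul_right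
          (b.commute_g_g (by omega) (by omega) (by omega) (by omega) (by omega))).mul_right
          (b.commute_g_ginv (by omega) (by omega) (by omega) (by omega) (by omega))).mul_right
          (b.commute_g_ginv (by omega) (by omega) (by omega) (by omega) (by omega))).symm
    have hfold : ∀ x : A,
        b.g (2 * m + 3) * (b.g (2 * m + 4) * (ascProd b.g (2 * m + 5) (2 * k) * x)) =
          ascProd b.g (2 * m + 3) (2 * k) * x := fun x => by
      rw [ascProd_cons (l := 2 * m + 3) (by omega), ascProd_cons (l := 2 * m + 3 + 1) (by omega)]
      simp only [mul_assoc]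
    rw [show 2 * (m + 1) + 2 = 2 * m + 4 by ring, show 2 * (m + 1) + 3 = 2 * m + 5 by ring,
      b.wordA_succ (by omega), mul_assoc, ← mul_assoc (b.wordX m), b.wordX_mul_g (by omega),
      mul_assoc _ (b.wordX m), hXP.left_comm, b.wordX_mul_ee (by omega) (by omega)]
    simp only [mul_assoc]
    rw [(b.commute_ginv_wordA (i := 2 * m + 4) (by omega) (by omega)).symm.left_comm,
      (b.commute_ginv_wordA (i := 2 * m + 3) (by omega) (by omega)).symm.left_comm,
      (b.commute_e_ginv (i := 2 * m + 4) (by omega) (by omega)).left_comm,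
      (b.commute_e_ginv (i := 2 * m + 3) (by omega) (by omega)).left_comm, hfold,
      ih (by omega), mul_smul_comm, mul_smul_comm, ← hfold,
      b.ginv_mul_g_cancel_left (by omega) (by omega),
      b.ginv_mul_g_cancel_left (by omega) (by omega)]

theorem e_wordA_g_ee {k : ℕ} (hk : 2 * k + 3 ≤ n) :
    b.e * (b.wordA k * (b.g (2 * k + 2) * ee b (k + 1))) = (r : R) • ee b (k + 1) := by
  simpa only [ascProd_of_lt (show 2 * (k + 1) < 2 * k + 3 by omega), one_mul] using
    b.e_wordA_g_ascProd_ee (m := k) (k := k + 1) le_rfl (by omega)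

/-- Writing `e_{(k+1)} = e_{(k)} B_k e`, the factor `g_{2k+1}⁻¹` moves past `e_{(k)}` and meets the
right eigenrelation of `e A_k e_{(k)} = e_{(k+1)}`. -/
theorem e_wordA_ginv_g_ee {k : ℕ} (hk : 2 * k + 4 ≤ n)
    (hG : ee b (k + 1) = ee b k * b.wordB k * b.e)
    (hR : ee b (k + 1) * b.g (2 * k + 1) = (q : R) • ee b (k + 1)) :
    b.e * (b.wordA k * (b.ginv (2 * k + 1) * (b.g (2 * k + 2) * ee b (k + 1)))) =
      (((q⁻¹ : Rˣ) : R) * r) • ee b (k + 1) := by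
  have hf : Commute (b.ginv (2 * k + 1)) (ee b k) := b.commute_ginv_ee le_rfl (by omega)
  have hh : Commute (b.g (2 * k + 2)) (ee b k) := b.commute_g_ee (by omega) (by omega)
  have hR' := b.mul_ginv_eq_inv_smul (by omega) (by omega) hR
  rw [mul_assoc] at hG
  calc b.e * (b.wordA k * (b.ginv (2 * k + 1) * (b.g (2 * k + 2) * ee b (k + 1))))
      = ee b (k + 1) * b.ginv (2 * k + 1) * (b.g (2 * k + 2) * (b.wordB k * b.e)) := by
        conv_lhs => rw [hG]
        rw [hh.left_comm, hf.left_comm, ee_succ]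
        simp only [mul_assoc]
    _ = ((q⁻¹ : Rˣ) : R) • (b.e * (b.wordA k * (b.g (2 * k + 2) * ee b (k + 1)))) := by
        rw [hR', smul_mul_assoc]
        conv_rhs => rw [hG]
        rw [hh.left_comm, ee_succ]
        simp only [mul_assoc]
    _ = _ := by rw [b.e_wordA_g_ee (by omega), smul_smul]

theorem e_wordA_wordX_ee_eq_e_wordA_wordY_ee {k : ℕ} (hk : 2 * k + 4 ≤ n)
    (hG : ee b (k + 1) = ee b k * b.wordB k * b.e)
    (hR : ee b (k + 1) * b.g (2 * k + 1) = (q : R) • ee b (k + 1)) :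
    b.e * (b.wordA k * (b.wordX k * ee b (k + 1))) =
      b.e * (b.wordA k * (b.wordY k * ee b (k + 1))) := by
  have htE : Commute (b.g (2 * k + 3)) (ee b (k + 1)) := b.commute_g_ee (by omega) (by omega)
  have htf : Commute (b.g (2 * k + 3)) (b.ginv (2 * k + 1)) :=
    b.commute_g_ginv (by omega) (by omega) (by omega) (by omega) (by omega)
  have hX : b.e * (b.wordA k * (b.g (2 * k + 2) * (b.g (2 * k + 3) *
      (b.ginv (2 * k + 1) * ee b (k + 1))))) =
      (((q⁻¹ : Rˣ) : R) * r) • (b.g (2 * k + 3) * ee b (k + 1)) := by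
    rw [b.ginv_mul_ee (by omega), mul_smul_comm, mul_smul_comm, mul_smul_comm, mul_smul_comm,
      htE.eq, ← mul_assoc (b.g _), ← mul_assoc (b.wordA k), ← mul_assoc b.e,
      b.e_wordA_g_ee (by omega), smul_mul_assoc, smul_smul]
  have hY : b.e * (b.wordA k * (b.ginv (2 * k + 1) * (b.g (2 * k + 3) *
      (b.g (2 * k + 2) * ee b (k + 1))))) =
      (((q⁻¹ : Rˣ) : R) * r) • (b.g (2 * k + 3) * ee b (k + 1)) := by
    rw [htf.symm.left_comm, (b.commute_g_wordA (i := 2 * k + 3) le_rfl (by omega)).symm.left_comm,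
      (b.commute_e_g (i := 2 * k + 3) (by omega) (by omega)).left_comm,
      b.e_wordA_ginv_g_ee hk hG hR, mul_smul_comm]
  simp only [wordX, wordY, mul_assoc]
  rw [b.ginv_mul_eq_smul_sub (i := 2 * k + 2) (by omega) (by omega) (ee b (k + 1)),
    b.ginv_mul_eq_smul_sub (i := 2 * k + 2) (by omega) (by omega)]
  simp only [mul_smul_comm, mul_sub]
  rw [hX, hY, htf.left_comm]

theorem ee_succ_succ_eq {k : ℕ} (hk : 2 * k + 4 ≤ n)
    (hG : ee b (k + 1) = ee b k * b.wordB k * b.e)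
    (hR : ee b (k + 1) * b.g (2 * k + 1) = (q : R) • ee b (k + 1)) :
    ee b (k + 1 + 1) = ee b (k + 1) * b.wordB (k + 1) * b.e := by
  have hY : Commute (b.wordY k) (ee b k) :=
    (((b.commute_ginv_ee (by omega) (by omega)).mul_left
      (b.commute_ginv_ee le_rfl (by omega))).mul_left
      (b.commute_g_ee (by omega) (by omega))).mul_left (b.commute_g_ee (by omega) (by omega))
  calc ee b (k + 1 + 1) = b.e * (b.wordA k * (b.wordX k * ee b (k + 1))) := by
        rw [ee_succ, b.wordA_succ (by omega), mul_assoc]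
    _ = b.e * (b.wordA k * (b.wordY k * ee b (k + 1))) :=
        b.e_wordA_wordX_ee_eq_e_wordA_wordY_ee hk hG hR
    _ = b.e * (b.wordA k * ee b k) * (b.wordY k * b.wordB k) * b.e := by
        rw [hG]
        simp only [mul_assoc, hY.left_comm]
    _ = ee b (k + 1) * b.wordB (k + 1) * b.e := by rw [← ee_succ, b.wordB_succ (by omega)]

theorem ee_mul_g_succ {k : ℕ} (hk : 2 * k + 4 ≤ n)
    (hG : ee b (k + 1 + 1) = ee b (k + 1) * b.wordB (k + 1) * b.e)
    (hR : ee b (k + 1) * b.g (2 * k + 1) = (q : R) • ee b (k + 1)) :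
    ee b (k + 1 + 1) * b.g (2 * (k + 1) + 1) = (q : R) • ee b (k + 1 + 1) := by
  have hB := b.semiconjBy_wordB_g (J := 2 * k + 1) (m := k + 1) (by omega) (by omega) (by omega)
  rw [show 2 * (k + 1) + 1 = 2 * k + 1 + 2 by ring, hG, mul_assoc,
    (b.commute_e_g (by omega) (by omega)).eq, ← mul_assoc, mul_assoc (ee b _), hB.eq,
    ← mul_assoc, hR, smul_mul_assoc, smul_mul_assoc]

theorem ee_succ_eq_and_mul_g {k : ℕ} (hk : 2 * k + 2 ≤ n) :
    ee b (k + 1) = ee b k * b.wordB k * b.e ∧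
      ee b (k + 1) * b.g (2 * k + 1) = (q : R) • ee b (k + 1) := by
  induction k with
  | zero => exact ⟨by simp [ee, wordB_zero], b.e_g1⟩
  | succ k ih =>
    obtain ⟨hG, hR⟩ := ih (by omega)
    have hG' := b.ee_succ_succ_eq (by omega) hG hR
    exact ⟨hG', b.ee_mul_g_succ (by omega) hG' hR⟩

end QBrauer

/-- Lemma 3.3(c): `e_{(k+1)} = e_{(k)} ⋅ g⁻_{2k,1} g⁺_{2k+1,2} ⋅ e`. -/
theorem ee_succ_alt (b : QBrauer R q r δ n A) (k : ℕ) (hk : 2*(k+1) ≤ n) :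
    ee b (k+1) = ee b k * (gmd b (2*k) 1 * gpd b (2*k+1) 2) * b.e :=
  (b.ee_succ_eq_and_mul_g (by omega)).1
end
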